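/- arXiv:1801.00194 — 3 statements merged into one kernel-verified Lean document; each statement's English description precedes it below -/
import Mathlib

section
/- Consider a transmission schedule in which station p (for 1 ≤ p ≤ n) transmits at exactly the rounds of the form 3·n²·ln n + i·x_p (i ≥ 0, counted from when p starts processing its current packet), where the x_p are distinct primes in [n·ln n, 3·n·ln n) and n > 20. Then in any interval of 3·n²·ln n consecutive rounds during which each station processes a single packet, station p transmits at least n times, while any other fixed station q can transmit simultaneously with p at most once; consequently at least one transmission of p in the interval is collision-free. -/
set_option maxHeartbeats 1000000

/-- Transmission schedule with distinct primes: station `p` transmits at rounds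
`s p + 3·n²·ln n + i·x p`.  In the interval `I = [t0 + 3·n²·ln n, t0 + 6·n²·ln n)`
(during which every station processes one fixed packet, started by round `t0`),
station `p` transmits at least `n` times, any other station transmits simultaneously
with `p` at most once, and consequently some transmission of `p` in `I` is
collision-free. -/
theorem stmt2 (n : ℕ) (hn : 20 < n) (x : Fin n → ℕ)
    (hprime : ∀ p, Nat.Prime (x p)) (hinj : Function.Injective x)
    (hlb : ∀ p, (n : ℝ) * Real.log n ≤ (x p : ℝ))
    (hub : ∀ p, (x p : ℝ) < 3 * n * Real.log n)
    (s : Fin n → ℝ) (transmits : Fin n → ℝ → Prop)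
    (htrans : ∀ p t, transmits p t ↔
      ∃ i : ℕ, t = s p + 3 * (n : ℝ) ^ 2 * Real.log n + (i : ℝ) * (x p : ℝ))
    (t0 : ℝ) (p : Fin n) (hs : ∀ q, s q ≤ t0) :
    n ≤ {t ∈ Set.Ico (t0 + 3 * (n : ℝ) ^ 2 * Real.log n)
          (t0 + 6 * (n : ℝ) ^ 2 * Real.log n) | transmits p t}.ncard ∧
    (∀ q, q ≠ p →
      {t ∈ Set.Ico (t0 + 3 * (n : ℝ) ^ 2 * Real.log n)
          (t0 + 6 * (n : ℝ) ^ 2 * Real.log n) | transmits p t ∧ transmits q t}.ncard ≤ 1) ∧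
    ∃ t ∈ Set.Ico (t0 + 3 * (n : ℝ) ^ 2 * Real.log n)
          (t0 + 6 * (n : ℝ) ^ 2 * Real.log n),
      transmits p t ∧ ∀ q, q ≠ p → ¬ transmits q t := by
  have hnR : (0:ℝ) < n := by positivity
  have hn21 : (21:ℝ) ≤ n := by exact_mod_cast hn
  set L := Real.log n with hLdef
  have hL3 : (3:ℝ) < L := by
    have hexp : Real.exp 3 < 21 := by
      have h := Real.exp_one_lt_d9
      have h3 : Real.exp 3 = Real.exp 1 ^ 3 := by
        rw [← Real.exp_nat_mul]; norm_num
      calc Real.exp 3 = Real.exp 1 ^ 3 := h3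
        _ < 2.7182818286 ^ 3 := by gcongr
        _ < 21 := by norm_num
    calc (3:ℝ) < Real.log 21 := (Real.lt_log_iff_exp_lt (by norm_num)).2 hexp
      _ ≤ L := Real.log_le_log (by norm_num) hn21
  have hL0 : (0:ℝ) < L := by linarith
  have hxpos : ∀ q, (0:ℝ) < x q := fun q => lt_of_lt_of_le (by positivity) (hlb q)
  -- abbreviations
  set C : ℝ := 3 * (n : ℝ) ^ 2 * L with hC
  have hCpos : 0 < C := by positivity
  have hbig : C < ((n:ℝ) * L) * ((n:ℝ) * L) := by
    have : ((n:ℝ)*L)*((n:ℝ)*L) - C = (n:ℝ)^2 * L * (L - 3) := by ring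
    nlinarith [mul_pos (mul_pos (pow_pos hnR 2) hL0) (by linarith : (0:ℝ) < L - 3)]
  set f : ℕ → ℝ := fun i => s p + C + (i : ℝ) * (x p : ℝ) with hf
  have hfinj : Function.Injective f := by
    intro i j h
    have h' : (i:ℝ) * x p = (j:ℝ) * x p := by
      simpa [hf] using h
    have := mul_right_cancel₀ (hxpos p).ne' h'
    exact_mod_cast this
  have ha0 : 0 ≤ (t0 - s p) / (x p : ℝ) := div_nonneg (by linarith [hs p]) (hxpos p).le
  set a : ℝ := (t0 - s p) / (x p : ℝ) with hadef
  have hax : a * x p = t0 - s p := div_mul_cancel₀ _ (hxpos p).ne'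
  set i₀ : ℕ := ⌈a⌉₊ with hi0
  have hi0ge : a ≤ (i₀ : ℝ) := Nat.le_ceil a
  have hi0lt : (i₀ : ℝ) < a + 1 := Nat.ceil_lt_add_one ha0
  -- membership of the n designated transmission times
  have hmem : ∀ k : ℕ, k < n → f (i₀ + k) ∈ Set.Ico (t0 + C) (t0 + 6 * (n : ℝ) ^ 2 * L) := by
    intro k hk
    constructor
    · have h1 : (t0 - s p) ≤ ((i₀ + k : ℕ) : ℝ) * x p := by
        rw [← hax]
        have : a ≤ ((i₀ + k : ℕ) : ℝ) := by push_cast; linarith [Nat.cast_nonneg (α := ℝ) k]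
        exact mul_le_mul_of_nonneg_right this (hxpos p).le
      simp only [hf]; linarith
    · have hk' : (k:ℝ) + 1 ≤ n := by exact_mod_cast hk
      have h2 : ((i₀ + k : ℕ) : ℝ) * x p < (t0 - s p) + C := by
        have hlt : ((i₀ + k : ℕ) : ℝ) < a + (n:ℝ) := by push_cast; linarith
        have : ((i₀ + k : ℕ) : ℝ) * x p < (a + (n:ℝ)) * x p :=
          mul_lt_mul_of_pos_right hlt (hxpos p)
        have hnx : (n:ℝ) * x p ≤ C := by
          have := hub p
          calc (n:ℝ) * x p ≤ (n:ℝ) * (3 * n * L) := by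
                exact mul_le_mul_of_nonneg_left (hub p).le hnR.le
            _ = C := by rw [hC]; ring
        nlinarith [hax]
      simp only [hf]
      have h6 : t0 + 6 * (n:ℝ)^2 * L = t0 + C + C := by rw [hC]; ring
      rw [h6]; linarith
  have htransf : ∀ k : ℕ, transmits p (f (i₀ + k)) := by
    intro k; rw [htrans]; exact ⟨i₀ + k, by simp [hf, hC]⟩
  -- Part 2 core: collision sets are subsingletons
  have hsub : ∀ q, q ≠ p → Set.Subsingleton {t ∈ Set.Ico (t0 + C)
      (t0 + 6 * (n : ℝ) ^ 2 * L) | transmits p t ∧ transmits q t} := by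
    intro q hq t ht t' ht'
    obtain ⟨⟨ht1, ht2⟩, hp1, hq1⟩ := ht
    obtain ⟨⟨ht1', ht2'⟩, hp1', hq1'⟩ := ht'
    obtain ⟨i, hi⟩ := (htrans p t).1 hp1
    obtain ⟨j, hj⟩ := (htrans q t).1 hq1
    obtain ⟨i', hi'⟩ := (htrans p t').1 hp1'
    obtain ⟨j', hj'⟩ := (htrans q t').1 hq1'
    set A : ℤ := (i : ℤ) - i' with hA
    set B : ℤ := (j : ℤ) - j' with hB
    have key : (A : ℝ) * x p = (B : ℝ) * x q := by
      push_cast [hA, hB]; linear_combination hi' - hi + hj - hj'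
    have keyZ : A * (x p : ℤ) = B * (x q : ℤ) := by exact_mod_cast key
    have hxne : x q ≠ x p := fun h => hq (hinj h)
    have hcop : IsCoprime ((x q : ℤ)) ((x p : ℤ)) := by
      rw [Int.isCoprime_iff_gcd_eq_one]
      exact_mod_cast (Nat.coprime_primes (hprime q) (hprime p)).2 hxne
    have hdvd : (x q : ℤ) ∣ A := by
      refine hcop.dvd_of_dvd_mul_right ⟨B, ?_⟩
      rw [keyZ]; ring
    by_cases hA0 : A = 0
    · have : (i : ℤ) = i' := by omega
      have : (i : ℝ) = i' := by exact_mod_cast this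
      rw [hi, hi', this]
    · have habs : (x q : ℤ) ≤ |A| := Int.le_of_dvd (abs_pos.2 hA0) ((dvd_abs _ _).2 hdvd)
      exfalso
      have hdiff : t - t' = (A : ℝ) * x p := by push_cast [hA]; linear_combination hi - hi'
      have h6 : t0 + 6 * (n:ℝ)^2 * L = t0 + C + C := by rw [hC]; ring
      have hb1 : t - t' < C := by rw [h6] at ht2; linarith
      have hb2 : t' - t < C := by rw [h6] at ht2'; linarith
      have hgeC : C < (x q : ℝ) * (x p : ℝ) :=
        lt_of_lt_of_le hbig (mul_le_mul (hlb q) (hlb p) (by positivity) (hxpos q).le)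
      rcases abs_cases A with ⟨hA1, _⟩ | ⟨hA1, _⟩
      · have hAge : (x q : ℝ) ≤ (A : ℝ) := by exact_mod_cast hA1 ▸ habs
        have : (x q : ℝ) * x p ≤ (A : ℝ) * x p :=
          mul_le_mul_of_nonneg_right hAge (hxpos p).le
        linarith
      · have hAle : (A : ℝ) ≤ -(x q : ℝ) := by
          have h1 : (x q : ℤ) ≤ -A := hA1 ▸ habs
          have h2 : ((x q : ℤ) : ℝ) ≤ ((-A : ℤ) : ℝ) := Int.cast_le.2 h1
          push_cast at h2; linarith
        have : (x q : ℝ) * x p ≤ -((A : ℝ) * x p) := by nlinarith [hxpos p]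
        linarith
  have hncard1 : ∀ q, q ≠ p → {t ∈ Set.Ico (t0 + C)
      (t0 + 6 * (n : ℝ) ^ 2 * L) | transmits p t ∧ transmits q t}.ncard ≤ 1 := by
    intro q hq
    exact (Set.ncard_le_one ((hsub q hq).finite)).2 fun a ha b hb => hsub q hq ha hb
  refine ⟨?_, hncard1, ?_⟩
  · -- at least n transmissions
    set S := {t ∈ Set.Ico (t0 + C) (t0 + 6 * (n : ℝ) ^ 2 * L) | transmits p t} with hS
    have hSfin : S.Finite := by
      apply Set.Finite.subset ((Set.finite_Icc 0 (i₀ + 3*n)).image f)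
      rintro t ⟨⟨htl, htu⟩, htp⟩
      obtain ⟨i, hi⟩ := (htrans p t).1 htp
      simp only [Set.mem_image, Set.mem_Icc]
      refine ⟨i, ⟨Nat.zero_le i, ?_⟩, hi.symm⟩
      -- i ≤ i₀ + 3n
      by_contra hcon
      push_neg at hcon
      have hi3n : (i₀:ℝ) + 3*(n:ℝ) < (i:ℝ) := by
        have h := (Nat.cast_lt (α := ℝ)).2 hcon
        push_cast at h
        linarith
      have h3nx : C ≤ 3 * (n:ℝ) * x p := by
        calc C = (n:ℝ) * ((n:ℝ) * L) * 3 := by rw [hC]; ring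
          _ ≤ (n:ℝ) * x p * 3 := by
              have := hlb p
              nlinarith
          _ = 3 * (n:ℝ) * x p := by ring
      have h6 : t0 + 6 * (n:ℝ)^2 * L = t0 + C + C := by rw [hC]; ring
      rw [hi, h6] at htu
      have : (i:ℝ) * x p < t0 - s p + C := by linarith
      have hge : (a + 3*(n:ℝ)) * x p < (i:ℝ) * x p := by
        have : a + 3*(n:ℝ) < (i:ℝ) := by linarith
        exact mul_lt_mul_of_pos_right this (hxpos p)
      nlinarith [hax]
    have himg : (fun k : Fin n => f (i₀ + k)) '' Set.univ ⊆ S := by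
      rintro t ⟨k, _, rfl⟩
      exact ⟨hmem k k.2, htransf k⟩
    have hginj : Function.Injective (fun k : Fin n => f (i₀ + k)) := by
      intro k k' h
      have h2 : i₀ + (k:ℕ) = i₀ + (k':ℕ) := hfinj h
      exact Fin.ext (by omega)
    have hcard : ((fun k : Fin n => f (i₀ + k)) '' Set.univ).ncard = n := by
      rw [Set.ncard_image_of_injective _ hginj, Set.ncard_univ, Nat.card_eq_fintype_card,
        Fintype.card_fin]
    calc n = ((fun k : Fin n => f (i₀ + k)) '' Set.univ).ncard := hcard.symm
      _ ≤ S.ncard := Set.ncard_le_ncard himg hSfin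
  · -- some collision-free transmission
    by_contra hcon
    push_neg at hcon
    have hchoice : ∀ k : Fin n, ∃ q, q ≠ p ∧ transmits q (f (i₀ + k)) := by
      intro k
      exact hcon _ (hmem k k.2) (htransf k)
    choose g hg1 hg2 using hchoice
    have hginj : Function.Injective g := by
      intro k k' h
      have h1 : f (i₀ + (k:ℕ)) ∈ {t ∈ Set.Ico (t0 + C)
          (t0 + 6 * (n : ℝ) ^ 2 * L) | transmits p t ∧ transmits (g k) t} :=
        ⟨hmem k k.2, htransf k, hg2 k⟩
      have h2 : f (i₀ + (k':ℕ)) ∈ {t ∈ Set.Ico (t0 + C)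
          (t0 + 6 * (n : ℝ) ^ 2 * L) | transmits p t ∧ transmits (g k) t} :=
        ⟨hmem k' k'.2, htransf k', h ▸ hg2 k'⟩
      have := hsub (g k) (hg1 k) h1 h2
      have := hfinj this
      have : (k:ℕ) = k' := by omega
      exact Fin.ext this
    have hgsurj : Function.Surjective g := Finite.surjective_of_injective hginj
    obtain ⟨k, hk⟩ := hgsurj p
    exact hg1 k hk
end

section
/- For a system of n stations running algorithm Move-Big-To-Front against a leaky-bucket adversary of injection rate 1 and burstiness b+1, the total number of silent rounds in any time segment T during which at least n² packets are always present in queues is strictly less than n², and consequently the total number of packets in queues never exceeds 2(n² + b). -/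
/-!
While at least `n²` packets are queued, some station holds at least `n` of them; as long as no
round is big the token visits the stations cyclically, so within `n` rounds it reaches that
station, which is then big. Hence fewer than `n` silent rounds of a segment precede its first
big round.

Every later small round of a station `v` is charged to the station `u` of the next big round.
The token left the front of the list at the last big round and does not wrap around before the
next one, so `v` precedes `u` in the list and `u ≠ v`. If two rounds of `v` have the same charge
`u`, then `u` was moved in front of `v` after the first and `v` is back in front of `u` at the
second, which only a big round of `v` in between can do. But a station `v` that has been big
keeps at least `n - 1` packets, and the rounds emptying them, together with a silent round of
`v`, would be `n` small rounds of `v` with pairwise distinct charges among the other `n - 1`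
stations. So the charge is injective on the silent rounds of `v`, and there are at most
`(n - 1) + n (n - 1) < n²` silent rounds.

For the queue bound at round `t`, let `α` be the last round before `t` with fewer than `n²`
queued packets. Of the rounds from `α` to `t` at most `n²` are silent and every other one
transmits a packet, while at most `(t - α) + b` packets are injected; so fewer than
`2 n² + b` packets are queued at `t`.
-/

/-- Move the station `a` to the front of the list. -/
def moveToFront {α : Type*} [DecidableEq α] (a : α) (l : List α) : List α :=
  a :: l.erase a

/-- The station cyclically following `a` in the list `l`. -/
def nextAfter {α : Type*} [DecidableEq α] (a : α) (l : List α) : α :=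
  l.getD ((l.idxOf a + 1) % l.length) a

open scoped List

section MoveToFront

variable {α : Type*} [DecidableEq α] {l : List α} {u v w : α}

theorem pair_sublist_moveToFront_of_ne (h : [u, v] <+ l) (hu : w ≠ u) (hv : w ≠ v) :
    [u, v] <+ moveToFront w l := by
  have hw : w ∉ [u, v] := by simp [hu, hv]
  exact (List.erase_of_not_mem hw ▸ h.erase w).cons w

theorem pair_sublist_moveToFront (hv : v ∈ l) (h : v ≠ u) : [u, v] <+ moveToFront u l :=
  (List.singleton_sublist.2 ((List.mem_erase_of_ne h).2 hv)).cons_cons u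

end MoveToFront

namespace List

variable {α : Type*} [DecidableEq α] {l : List α} {u v : α}

theorem Nodup.idxOf_lt_of_pair_sublist (hl : l.Nodup) (h : [u, v] <+ l) :
    l.idxOf u < l.idxOf v := by
  have : l.Pairwise (fun x y => l.idxOf x < l.idxOf y) :=
    pairwise_iff_getElem.2 fun i j hi hj hij => by simpa [hl.idxOf_getElem] using hij
  exact this.forall_sublist h

theorem pair_sublist_of_idxOf_lt (hv : v ∈ l) (h : l.idxOf u < l.idxOf v) : [u, v] <+ l := by
  have hv' := idxOf_lt_length_iff.2 hv
  have hut : u ∈ l.take (l.idxOf v) :=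
    mem_take_iff_getElem.2 ⟨l.idxOf u, by omega, getElem_idxOf (h.trans hv')⟩
  have hvd : v ∈ l.drop (l.idxOf v) :=
    mem_drop_iff_getElem.2 ⟨0, by omega, by simp⟩
  simpa using (singleton_sublist.2 hut).append (singleton_sublist.2 hvd)

theorem Nodup.idxOf_nextAfter (hl : l.Nodup) (hu : u ∈ l) :
    l.idxOf (nextAfter u l) = (l.idxOf u + 1) % l.length := by
  have hlen : 0 < l.length := length_pos_of_mem hu
  rw [nextAfter, getD_eq_getElem _ _ (Nat.mod_lt _ hlen), hl.idxOf_getElem]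

end List

open Classical in
noncomputable def nextBig {n : ℕ} (queue : ℕ → Fin n → ℕ) (token : ℕ → Fin n)
    (t : ℕ) : ℕ :=
  if h : ∃ s, t < s ∧ n ≤ queue s (token s) then Nat.find h else 0

theorem nextBig_spec {n : ℕ} {queue : ℕ → Fin n → ℕ} {token : ℕ → Fin n} {t : ℕ}
    (h : ∃ s, t < s ∧ n ≤ queue s (token s)) :
    t < nextBig queue token t ∧
      n ≤ queue (nextBig queue token t) (token (nextBig queue token t)) ∧
      ∀ ρ ∈ Finset.Ioo t (nextBig queue token t), queue ρ (token ρ) < n := by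
  rw [nextBig, dif_pos h]
  refine ⟨(Nat.find_spec h).1, (Nat.find_spec h).2, fun ρ hρ => ?_⟩
  rw [Finset.mem_Ioo] at hρ
  exact not_le.1 fun hbig => Nat.find_min h hρ.2 ⟨hρ.1, hbig⟩

structure IsMoveBigToFrontRun (n : ℕ) (inject queue : ℕ → Fin n → ℕ)
    (order : ℕ → List (Fin n)) (token : ℕ → Fin n) : Prop where
  order_zero : order 0 = List.finRange n
  queue_succ : ∀ t p, queue (t + 1) p =
    queue t p + inject t p - (if p = token t ∧ 1 ≤ queue t p then 1 else 0)
  step_big : ∀ t, n ≤ queue t (token t) →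
    order (t + 1) = moveToFront (token t) (order t) ∧ token (t + 1) = token t
  step_small : ∀ t, queue t (token t) < n →
    order (t + 1) = order t ∧ token (t + 1) = nextAfter (token t) (order t)

namespace IsMoveBigToFrontRun

open Finset

variable {n : ℕ} {inject queue : ℕ → Fin n → ℕ} {order : ℕ → List (Fin n)}
  {token : ℕ → Fin n} (hr : IsMoveBigToFrontRun n inject queue order token)
include hr

theorem perm_finRange (t : ℕ) : (order t).Perm (List.finRange n) := by
  induction t with
  | zero => rw [hr.order_zero]
  | succ t ih =>
    by_cases hbig : n ≤ queue t (token t)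
    · rw [(hr.step_big t hbig).1, moveToFront]
      exact (List.perm_cons_erase (ih.mem_iff.2 (List.mem_finRange _))).symm.trans ih
    · rw [(hr.step_small t (not_le.1 hbig)).1]
      exact ih

theorem nodup_order (t : ℕ) : (order t).Nodup :=
  (hr.perm_finRange t).nodup_iff.2 (List.nodup_finRange n)

theorem mem_order (t : ℕ) (p : Fin n) : p ∈ order t :=
  (hr.perm_finRange t).mem_iff.2 (List.mem_finRange p)

theorem length_order (t : ℕ) : (order t).length = n := by
  rw [(hr.perm_finRange t).length_eq, List.length_finRange]

theorem idxOf_order_lt (t : ℕ) (p : Fin n) : (order t).idxOf p < n :=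
  by simpa [hr.length_order] using List.idxOf_lt_length_iff.2 (hr.mem_order t p)

theorem order_add_of_small {β k : ℕ}
    (hs : ∀ ρ ∈ Ico β (β + k), queue ρ (token ρ) < n) : order (β + k) = order β := by
  induction k with
  | zero => rfl
  | succ k ih =>
    rw [← add_assoc, (hr.step_small _ (hs _ (by simp))).1,
      ih fun ρ hρ => hs ρ (Ico_subset_Ico_right (by omega) hρ)]

theorem idxOf_token_add_of_small {β k : ℕ}
    (hs : ∀ ρ ∈ Ico β (β + k), queue ρ (token ρ) < n) :
    (order β).idxOf (token (β + k)) = ((order β).idxOf (token β) + k) % n := by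
  induction k with
  | zero =>
    rw [add_zero, add_zero, Nat.mod_eq_of_lt (hr.idxOf_order_lt β _)]
  | succ k ih =>
    have hs' : ∀ ρ ∈ Ico β (β + k), queue ρ (token ρ) < n :=
      fun ρ hρ => hs ρ (Ico_subset_Ico_right (by omega) hρ)
    rw [← add_assoc, (hr.step_small _ (hs _ (by simp))).2, hr.order_add_of_small hs',
      (hr.nodup_order β).idxOf_nextAfter (hr.mem_order β _), ih hs', hr.length_order,
      Nat.mod_add_mod, add_assoc]

theorem pair_sublist_order_succ {u v : Fin n} {t : ℕ} (h : [u, v] <+ order t) :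
    [u, v] <+ order (t + 1) ∨ (n ≤ queue t (token t) ∧ token t = v) := by
  by_cases hbig : n ≤ queue t (token t)
  · rw [(hr.step_big t hbig).1]
    by_cases hv : token t = v
    · exact .inr ⟨hbig, hv⟩
    by_cases hu : token t = u
    · subst hu
      refine .inl (pair_sublist_moveToFront (hr.mem_order t v) ?_)
      simpa [eq_comm] using (hr.nodup_order t).sublist h
    · exact .inl (pair_sublist_moveToFront_of_ne h hu hv)
  · exact .inl ((hr.step_small t (not_le.1 hbig)).1 ▸ h)

theorem exists_big_of_pair_sublist_swap {u v : Fin n} {x y : ℕ} (hxy : x ≤ y)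
    (hx : [u, v] <+ order x) (hy : [v, u] <+ order y) :
    ∃ r ∈ Ico x y, n ≤ queue r (token r) ∧ token r = v := by
  have persist : ∀ z, x ≤ z →
      [u, v] <+ order z ∨ ∃ r ∈ Ico x z, n ≤ queue r (token r) ∧ token r = v := by
    intro z hz
    induction z, hz using Nat.le_induction with
    | base => exact .inl hx
    | succ z hz ih =>
      rcases ih with h | ⟨r, hr', hbig⟩
      · refine (hr.pair_sublist_order_succ h).imp id fun hbig => ⟨z, by simp [hz], hbig⟩
      · exact .inr ⟨r, Ico_subset_Ico_right (by omega) hr', hbig⟩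
  refine (persist y hxy).resolve_left fun h => ?_
  have := (hr.nodup_order y).idxOf_lt_of_pair_sublist h
  have := (hr.nodup_order y).idxOf_lt_of_pair_sublist hy
  omega

theorem queue_le_of_forall_token_ne {q : Fin n} {t₁ t₂ : ℕ} (h : t₁ ≤ t₂)
    (hne : ∀ s ∈ Ico t₁ t₂, token s ≠ q) : queue t₁ q ≤ queue t₂ q := by
  induction t₂, h using Nat.le_induction with
  | base => rfl
  | succ t₂ h ih =>
    have hq : ¬(q = token t₂ ∧ 1 ≤ queue t₂ q) :=
      fun hq => hne t₂ (by simp [h]) hq.1.symm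
    rw [hr.queue_succ, if_neg hq]
    exact (ih fun s hs => hne s (Ico_subset_Ico_right (by omega) hs)).trans (by omega)

theorem queue_le_add_card_served {q : Fin n} {t₁ t₂ : ℕ} (h : t₁ ≤ t₂) :
    queue t₁ q ≤
      queue t₂ q + #{τ ∈ Ico t₁ t₂ | token τ = q ∧ 1 ≤ queue τ q} := by
  induction t₂, h using Nat.le_induction with
  | base => simp
  | succ t₂ h ih =>
    rw [← insert_Ico_right_eq_Ico_add_one h, filter_insert]
    by_cases hs : token t₂ = q ∧ 1 ≤ queue t₂ q
    · rw [if_pos hs, card_insert_of_notMem (by simp), hr.queue_succ, if_pos ⟨hs.1.symm, hs.2⟩]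
      omega
    · rw [if_neg hs, hr.queue_succ, if_neg fun h' => hs ⟨h'.1.symm, h'.2⟩]
      omega

theorem sub_one_le_queue_succ (t : ℕ) (p : Fin n) : queue t p - 1 ≤ queue (t + 1) p := by
  rw [hr.queue_succ]; split_ifs <;> omega

theorem sum_queue_succ_add_one (t : ℕ) :
    ∑ p, queue (t + 1) p + 1 =
      ∑ p, queue t p + ∑ p, inject t p + if queue t (token t) = 0 then 1 else 0 := by
  have hserved : ∑ p, (if p = token t ∧ 1 ≤ queue t p then 1 else 0) =
      if queue t (token t) = 0 then 0 else 1 := by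
    rw [Fintype.sum_eq_single (token t) fun p hp => if_neg fun h => hp h.1]
    split_ifs <;> omega
  have hstation : ∀ p, queue (t + 1) p + (if p = token t ∧ 1 ≤ queue t p then 1 else 0) =
      queue t p + inject t p := fun p => by
    rw [hr.queue_succ]; split_ifs <;> omega
  have := Finset.sum_congr rfl fun p (_ : p ∈ univ) => hstation p
  rw [sum_add_distrib, sum_add_distrib, hserved] at this
  split_ifs at this ⊢ <;> omega

theorem sum_queue_add_add (t d : ℕ) :
    ∑ p, queue (t + d) p + d = ∑ p, queue t p + ∑ i ∈ Ico t (t + d), ∑ p, inject i p +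
      #{i ∈ Ico t (t + d) | queue i (token i) = 0} := by
  induction d with
  | zero => simp
  | succ d ih =>
    rw [show t + (d + 1) = t + d + 1 by ring, sum_Ico_succ_top (by omega), card_filter,
      sum_Ico_succ_top (by omega), ← card_filter]
    have := hr.sum_queue_succ_add_one (t + d)
    omega

theorem exists_big_lt {β : ℕ} (htot : n ^ 2 ≤ ∑ p, queue β p) :
    ∃ i < n, n ≤ queue (β + i) (token (β + i)) := by
  by_contra! hsmall
  have hn : 0 < n := (token β).pos
  obtain ⟨q, -, hq⟩ : ∃ q ∈ univ, n ≤ queue β q :=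
    exists_le_of_sum_le ⟨token β, mem_univ _⟩ (by simpa [sq] using htot)
  have hvisit : ∃ k < n, token (β + k) = q := by
    have hp := hr.idxOf_order_lt β (token β)
    set L := order β
    have hkn : (L.idxOf q + n - L.idxOf (token β)) % n < n := Nat.mod_lt _ hn
    refine ⟨_, hkn, ?_⟩
    rw [← List.idxOf_inj (hr.mem_order β _), hr.idxOf_token_add_of_small, Nat.add_mod_mod,
      show L.idxOf (token β) + (L.idxOf q + n - L.idxOf (token β)) = L.idxOf q + n by omega,
      Nat.add_mod_right, Nat.mod_eq_of_lt (hr.idxOf_order_lt β q)]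
    intro ρ hρ
    obtain ⟨i, rfl⟩ : ∃ i, ρ = β + i := ⟨ρ - β, by simp at hρ; omega⟩
    exact hsmall i (by simp at hρ; omega)
  -- at its first visit the token finds `q` with at least as many packets as at round `β`
  obtain ⟨hk, hkq⟩ := Nat.find_spec hvisit
  have hgrow : queue β q ≤ queue (β + Nat.find hvisit) q := by
    refine hr.queue_le_of_forall_token_ne (by omega) fun s hs hsq => ?_
    rw [mem_Ico] at hs
    exact Nat.find_min hvisit (m := s - β) (by omega)
      ⟨by omega, by rwa [Nat.add_sub_cancel' hs.1]⟩
  have := hsmall _ hk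
  rw [hkq] at this
  omega

theorem token_ne_of_small_run {x y : ℕ} (hxy : x < y) (htot : n ^ 2 ≤ ∑ p, queue x p)
    (hs : ∀ ρ ∈ Ico x y, queue ρ (token ρ) < n) : token y ≠ token x := by
  obtain ⟨i, hi, hbig⟩ := hr.exists_big_lt htot
  have hyx : y - x < n := by
    by_contra!
    exact (hs (x + i) (by simp; omega)).not_ge hbig
  have hidx := hr.idxOf_token_add_of_small (β := x) (k := y - x)
    (by rwa [Nat.add_sub_cancel' hxy.le])
  rw [Nat.add_sub_cancel' hxy.le] at hidx
  intro heq
  have hp := hr.idxOf_order_lt x (token x)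
  rw [heq, Nat.add_mod_eq_ite, Nat.mod_eq_of_lt hp, Nat.mod_eq_of_lt hyx] at hidx
  split_ifs at hidx <;> omega

theorem exists_big_gt {t : ℕ} (htot : n ^ 2 ≤ ∑ p, queue t p)
    (hsmall : queue t (token t) < n) :
    ∃ s, t < s ∧ n ≤ queue s (token s) := by
  obtain ⟨i, -, hbig⟩ := hr.exists_big_lt htot
  refine ⟨t + i, ?_, hbig⟩
  rcases Nat.eq_zero_or_pos i with rfl | hi
  · exact absurd hbig (not_le.2 hsmall)
  · omega

section Segment

variable {t₀ t₁ : ℕ} (hT : ∀ ρ ∈ Ico t₀ t₁, n ^ 2 ≤ ∑ p, queue ρ p)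
include hT

theorem pair_sublist_token_nextBig {t : ℕ} (ht : t ∈ Ico t₀ t₁)
    (hsmall : queue t (token t) < n)
    (hafter : ∃ σ ∈ Ico t₀ t, n ≤ queue σ (token σ)) :
    [token t, token (nextBig queue token t)] <+ order t := by
  obtain ⟨σ, hσ, hσbig⟩ := hafter
  rw [mem_Ico] at ht hσ
  let P := fun ρ => t₀ ≤ ρ ∧ n ≤ queue ρ (token ρ)
  set s' := Nat.findGreatest P (t - 1)
  have hs' : P s' := Nat.findGreatest_spec (m := σ) (by omega) ⟨hσ.1, hσbig⟩
  have hs't : s' < t := by have := Nat.findGreatest_le (P := P) (t - 1); omega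
  have hsmall_before : ∀ ρ ∈ Ioo s' t, queue ρ (token ρ) < n := fun ρ hρ => by
    rw [mem_Ioo] at hρ
    by_contra! h
    exact Nat.findGreatest_is_greatest hρ.1 (by omega) ⟨by omega, h⟩
  obtain ⟨hts, -, hsmall_after⟩ :=
    nextBig_spec (hr.exists_big_gt (hT t (by simp; omega)) hsmall)
  set s := nextBig queue token t
  have hrun : ∀ ρ ∈ Ico (s' + 1) s, queue ρ (token ρ) < n := fun ρ hρ => by
    rw [mem_Ico] at hρ
    rcases lt_trichotomy ρ t with h | rfl | h
    · exact hsmall_before ρ (mem_Ioo.2 ⟨by omega, h⟩)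
    · exact hsmall
    · exact hsmall_after ρ (mem_Ioo.2 ⟨h, hρ.2⟩)
  -- after the big round `s'` the token starts from the front and cannot wrap around before `s`
  have hsn : s - (s' + 1) < n := by
    obtain ⟨i, hi, hbig⟩ := hr.exists_big_lt (hT (s' + 1) (by simp; omega))
    by_contra!
    exact (hrun (s' + 1 + i) (by simp; omega)).not_ge hbig
  have hfront : (order (s' + 1)).idxOf (token (s' + 1)) = 0 := by
    rw [(hr.step_big s' hs'.2).1, (hr.step_big s' hs'.2).2, moveToFront, List.idxOf_cons_self]
  have hidx : ∀ ρ, s' + 1 ≤ ρ → ρ ≤ s →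
      (order (s' + 1)).idxOf (token ρ) = ρ - (s' + 1) := by
    intro ρ h₁ h₂
    have := hr.idxOf_token_add_of_small (β := s' + 1) (k := ρ - (s' + 1))
      fun x hx => hrun x (Ico_subset_Ico_right (by omega) hx)
    rwa [Nat.add_sub_cancel' h₁, hfront, zero_add, Nat.mod_eq_of_lt (by omega)] at this
  have horder : order t = order (s' + 1) := by
    have := hr.order_add_of_small (β := s' + 1) (k := t - (s' + 1))
      fun x hx => hrun x (Ico_subset_Ico_right (by omega) hx)
    rwa [Nat.add_sub_cancel' (by omega)] at this
  rw [horder]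
  refine List.pair_sublist_of_idxOf_lt (hr.mem_order _ _) ?_
  rw [hidx t (by omega) (by omega), hidx s (by omega) le_rfl]
  omega

theorem token_nextBig_ne {t : ℕ} (ht : t ∈ Ico t₀ t₁) (hsmall : queue t (token t) < n)
    (hafter : ∃ σ ∈ Ico t₀ t, n ≤ queue σ (token σ)) :
    token (nextBig queue token t) ≠ token t := by
  have := (hr.nodup_order t).sublist (hr.pair_sublist_token_nextBig hT ht hsmall hafter)
  simpa [eq_comm] using this

theorem exists_big_of_token_nextBig_eq {x y : ℕ}
    (hx : x ∈ Ico t₀ t₁) (hy : y ∈ Ico t₀ t₁)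
    (hxy : x < y) (hsx : queue x (token x) < n) (hsy : queue y (token y) < n)
    (htok : token y = token x) (hafter : ∃ σ ∈ Ico t₀ y, n ≤ queue σ (token σ))
    (hcharge : token (nextBig queue token x) = token (nextBig queue token y)) :
    ∃ r ∈ Ioo x y, n ≤ queue r (token r) ∧ token r = token x := by
  obtain ⟨hxs, hsbig, hsmall_after⟩ := nextBig_spec (hr.exists_big_gt (hT x hx) hsx)
  set s := nextBig queue token x
  have hs_lt : s < y := by
    by_contra! h
    refine hr.token_ne_of_small_run hxy (hT x hx) (fun ρ hρ => ?_) htok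
    rw [mem_Ico] at hρ
    rcases hρ.1.eq_or_lt with rfl | h'
    · exact hsx
    · exact hsmall_after ρ (mem_Ioo.2 ⟨h', by omega⟩)
  have hyu : [token x, token s] <+ order y := by
    rw [← htok, hcharge]
    exact hr.pair_sublist_token_nextBig hT hy hsy hafter
  have hsu : [token s, token x] <+ order (s + 1) := by
    rw [(hr.step_big s hsbig).1]
    refine pair_sublist_moveToFront (hr.mem_order _ _) ?_
    rw [← htok, hcharge]
    exact (hr.token_nextBig_ne hT hy hsy hafter).symm
  obtain ⟨r, hr', h⟩ := hr.exists_big_of_pair_sublist_swap hs_lt hsu hyu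
  rw [mem_Ico] at hr'
  exact ⟨r, mem_Ioo.2 ⟨by omega, hr'.2⟩, h⟩

/-- Charging each round of `H` to the station of the next big round: the charge avoids `v`
and, as no `v`-round between two members of `H` is big, it is injective. -/
theorem card_le_of_forall_small_between {v : Fin n} {H : Finset ℕ}
    (hH : ∀ τ ∈ H, τ ∈ Ico t₀ t₁ ∧ queue τ (token τ) < n ∧ token τ = v ∧
      ∃ σ ∈ Ico t₀ τ, n ≤ queue σ (token σ))
    (hsep : ∀ x ∈ H, ∀ y ∈ H, ∀ r ∈ Ioo x y, token r = v → queue r v < n) :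
    #H ≤ n - 1 := by
  have hcharge : ∀ x ∈ H, ∀ y ∈ H, x < y →
      token (nextBig queue token x) ≠ token (nextBig queue token y) := by
    intro x hx y hy hxy heq
    obtain ⟨hxT, hxs, hxv, -⟩ := hH x hx
    obtain ⟨hyT, hys, hyv, hya⟩ := hH y hy
    obtain ⟨r, hr', hbig, hrv⟩ := hr.exists_big_of_token_nextBig_eq hT hxT hyT hxy hxs hys
      (hyv.trans hxv.symm) hya heq
    rw [hrv, hxv] at hbig
    exact (hsep x hx y hy r hr' (hrv.trans hxv)).not_ge hbig
  calc #H ≤ #(univ.erase v) := by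
        refine card_le_card_of_injOn (fun τ => token (nextBig queue token τ))
          (fun τ hτ => ?_) (fun x hx y hy h => ?_)
        · obtain ⟨hτT, hτs, hτv, hτa⟩ := hH τ hτ
          exact mem_erase.2 ⟨hτv ▸ hr.token_nextBig_ne hT hτT hτs hτa, mem_univ _⟩
        · by_contra hne
          rcases lt_or_gt_of_ne hne with hxy | hxy
          · exact hcharge x hx y hy hxy h
          · exact hcharge y hy x hx hxy h.symm
    _ = n - 1 := by simp

theorem queue_ne_zero_of_big_before {v : Fin n} {r y : ℕ} (hy : y ∈ Ico t₀ t₁)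
    (hyv : token y = v) (hr₀ : r ∈ Ico t₀ y) (hbig : n ≤ queue r v) (hrv : token r = v) :
    queue y v ≠ 0 := by
  rw [mem_Ico] at hy hr₀
  let P := fun ρ => t₀ ≤ ρ ∧ n ≤ queue ρ v ∧ token ρ = v
  set rs := Nat.findGreatest P (y - 1)
  have hrs : P rs := Nat.findGreatest_spec (m := r) (by omega) ⟨hr₀.1, hbig, hrv⟩
  have hrs_lt : rs < y := by have := Nat.findGreatest_le (P := P) (y - 1); omega
  have hlast : ∀ ρ ∈ Ioo rs y, token ρ = v → queue ρ v < n := fun ρ hρ hρv => by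
    rw [mem_Ioo] at hρ
    by_contra! h
    exact Nat.findGreatest_is_greatest hρ.1 (by omega) ⟨by omega, h, hρv⟩
  intro hy0
  set G := {τ ∈ Ico (rs + 1) y | token τ = v ∧ 1 ≤ queue τ v}
  have hG : n - 1 ≤ #G := by
    have h₁ : n ≤ queue rs v := hrs.2.1
    have h₂ := hr.sub_one_le_queue_succ rs v
    have h₃ : queue (rs + 1) v ≤ queue y v + #G := hr.queue_le_add_card_served hrs_lt
    omega
  have hmem : ∀ τ ∈ insert y G, rs < τ ∧ τ ≤ y ∧ token τ = v := by
    intro τ hτ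
    rcases mem_insert.1 hτ with rfl | hτ
    · exact ⟨hrs_lt, le_rfl, hyv⟩
    · simp only [G, mem_filter, mem_Ico] at hτ
      exact ⟨by omega, by omega, hτ.2.1⟩
  have hH := hr.card_le_of_forall_small_between hT (H := insert y G) (v := v)
    (fun τ hτ => ?_) (fun x hx z hz ρ hρ hρv => ?_)
  · rw [card_insert_of_notMem (by simp [G])] at hH
    have := v.pos
    omega
  · obtain ⟨h₁, h₂, hτv⟩ := hmem τ hτ
    refine ⟨mem_Ico.2 ⟨by omega, by omega⟩, ?_, hτv, rs, mem_Ico.2 ⟨hrs.1, h₁⟩,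
      hrs.2.2 ▸ hrs.2.1⟩
    rw [hτv]
    rcases h₂.eq_or_lt with rfl | h₂
    · rw [hy0]; exact v.pos
    · exact hlast τ (mem_Ioo.2 ⟨h₁, h₂⟩) hτv
  · obtain ⟨hx, -, -⟩ := hmem x hx
    obtain ⟨-, hz, -⟩ := hmem z hz
    rw [mem_Ioo] at hρ
    exact hlast ρ (mem_Ioo.2 ⟨by omega, by omega⟩) hρv

theorem card_silent_token_after_big_le (v : Fin n) :
    #{t ∈ Ico t₀ t₁ | queue t (token t) = 0 ∧ token t = v ∧
      ∃ σ ∈ Ico t₀ t, n ≤ queue σ (token σ)} ≤ n - 1 := by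
  refine hr.card_le_of_forall_small_between hT (v := v) (fun τ hτ => ?_)
    (fun x hx y hy ρ hρ hρv => ?_)
  · rw [mem_filter] at hτ
    exact ⟨hτ.1, by rw [hτ.2.1]; exact v.pos, hτ.2.2⟩
  · by_contra! hbig
    rw [mem_filter, mem_Ico] at hx hy
    rw [mem_Ioo] at hρ
    exact hr.queue_ne_zero_of_big_before hT (mem_Ico.2 hy.1) hy.2.2.1
      (mem_Ico.2 ⟨by omega, hρ.2⟩) hbig hρv (hy.2.2.1 ▸ hy.2.1)

theorem card_silent_before_big_le :
    #{t ∈ Ico t₀ t₁ | queue t (token t) = 0 ∧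
      ¬∃ σ ∈ Ico t₀ t, n ≤ queue σ (token σ)} ≤ n - 1 := by
  rcases lt_or_ge t₀ t₁ with h | h
  · obtain ⟨i, hi, hbig⟩ := hr.exists_big_lt (hT t₀ (by simp [h]))
    calc _ ≤ #(Ico t₀ (t₀ + i)) := card_le_card fun t ht => ?_
      _ ≤ n - 1 := by simp; omega
    simp only [mem_filter, mem_Ico] at ht ⊢
    refine ⟨ht.1.1, lt_of_not_ge fun hle => ?_⟩
    rcases hle.eq_or_lt with heq | hlt
    · rw [heq, ht.2.1] at hbig
      exact (token t).pos.not_ge hbig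
    · exact ht.2.2 ⟨t₀ + i, by simp [hlt], hbig⟩
  · simp [Ico_eq_empty_of_le h]

theorem card_silent_lt : #{t ∈ Ico t₀ t₁ | queue t (token t) = 0} < n ^ 2 := by
  have hn : 0 < n := (token t₀).pos
  set S := {t ∈ Ico t₀ t₁ | queue t (token t) = 0}
  have hsplit := card_filter_add_card_filter_not (s := S)
    (p := fun t => ∃ σ ∈ Ico t₀ t, n ≤ queue σ (token σ))
  have hafter : #{t ∈ S | ∃ σ ∈ Ico t₀ t, n ≤ queue σ (token σ)} ≤ n * (n - 1) := by
    rw [card_eq_sum_card_fiberwise (f := token) (t := univ) fun _ _ => mem_univ _]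
    calc _ ≤ ∑ _v : Fin n, (n - 1) := sum_le_sum fun v _ =>
          (card_le_card fun t => ?_).trans (hr.card_silent_token_after_big_le hT v)
      _ = n * (n - 1) := by simp
    simp only [S, mem_filter]
    tauto
  have hbefore : #{t ∈ S | ¬∃ σ ∈ Ico t₀ t, n ≤ queue σ (token σ)} ≤ n - 1 := by
    rw [filter_filter]
    exact hr.card_silent_before_big_le hT
  have : n * (n - 1) + (n - 1) < n ^ 2 := by
    obtain ⟨m, rfl⟩ := Nat.exists_eq_add_of_lt hn
    simp only [zero_add, Nat.add_sub_cancel]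
    nlinarith
  omega

end Segment

theorem sum_queue_lt (hq0 : ∀ p, queue 0 p = 0) {b : ℕ}
    (hlb : ∀ a t, ∑ i ∈ Ico a (a + t), ∑ p, inject i p ≤ t + b) (t : ℕ) :
    ∑ p, queue t p < 2 * n ^ 2 + b := by
  let P := fun s => ∑ p, queue s p < n ^ 2
  set α := Nat.findGreatest P t
  have hα : ∑ p, queue α p < n ^ 2 :=
    Nat.findGreatest_spec (P := P) (Nat.zero_le t) (by simp [P, hq0, (token 0).pos])
  have hαt : α ≤ t := Nat.findGreatest_le t
  have hfull : ∀ ρ ∈ Ico (α + 1) t, n ^ 2 ≤ ∑ p, queue ρ p := fun ρ hρ => by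
    rw [mem_Ico] at hρ
    exact not_lt.1 (Nat.findGreatest_is_greatest (P := P) (by omega) hρ.2.le)
  have hacc := hr.sum_queue_add_add α (t - α)
  have hinj := hlb α (t - α)
  rw [Nat.add_sub_cancel' hαt] at hacc hinj
  have hsil : #{i ∈ Ico α t | queue i (token i) = 0} ≤
      #{i ∈ Ico (α + 1) t | queue i (token i) = 0} + 1 :=
    calc _ ≤ #(insert α {i ∈ Ico (α + 1) t | queue i (token i) = 0}) :=
          card_le_card fun i hi => by simp only [mem_insert, mem_filter, mem_Ico] at hi ⊢; omega
      _ ≤ _ := card_insert_le _ _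
  have := hr.card_silent_lt hfull
  omega

end IsMoveBigToFrontRun

theorem stmt5_general (n b : ℕ)
    (inject : ℕ → Fin n → ℕ)
    (hlb : ∀ a t : ℕ, (∑ i ∈ Finset.Ico a (a + t), ∑ p, inject i p) ≤ t + b)
    (queue : ℕ → Fin n → ℕ)
    (order : ℕ → List (Fin n))
    (token : ℕ → Fin n)
    (horder0 : order 0 = List.finRange n)
    (hq0 : ∀ p, queue 0 p = 0)
    (hqueue : ∀ t p, queue (t + 1) p =
      queue t p + inject t p - (if p = token t ∧ 1 ≤ queue t p then 1 else 0))
    (hbig : ∀ t, n ≤ queue t (token t) →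
      order (t + 1) = moveToFront (token t) (order t) ∧ token (t + 1) = token t)
    (hsmall : ∀ t, queue t (token t) < n →
      order (t + 1) = order t ∧ token (t + 1) = nextAfter (token t) (order t)) :
    (∀ a len : ℕ,
      (∀ t ∈ Finset.Ico a (a + len), n ^ 2 ≤ ∑ p, queue t p) →
      ((Finset.Ico a (a + len)).filter (fun t => queue t (token t) = 0)).card < n ^ 2) ∧
    ∀ t, (∑ p, queue t p) ≤ 2 * (n ^ 2 + b) := by
  have hr : IsMoveBigToFrontRun n inject queue order token := ⟨horder0, hqueue, hbig, hsmall⟩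
  refine ⟨fun a len hT => hr.card_silent_lt hT, fun t => ?_⟩
  have := hr.sum_queue_lt hq0 hlb t
  omega

/-- Move-Big-To-Front for `n` stations against the leaky-bucket adversary of type
`(1,b)` (burstiness `b+1`): a token travels along a shared list; the token holder
transmits a packet if it has one; a holder with at least `n` packets is big, is moved to
the front of the list and keeps the token; otherwise the token moves cyclically to the
next station.  Then in any time segment during which at least `n²` packets are always
queued, the number of silent rounds is less than `n²`; consequently the total number of
queued packets never exceeds `2(n² + b)`. -/
theorem stmt5 (n b : ℕ) (hn : 0 < n)
    (inject : ℕ → Fin n → ℕ)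
    (hlb : ∀ a t : ℕ, (∑ i ∈ Finset.Ico a (a + t), ∑ p, inject i p) ≤ t + b)
    (queue : ℕ → Fin n → ℕ)
    (order : ℕ → List (Fin n))
    (token : ℕ → Fin n)
    (horder0 : order 0 = List.finRange n)
    (htoken0 : token 0 = ⟨0, hn⟩)
    (hq0 : ∀ p, queue 0 p = 0)
    (hqueue : ∀ t p, queue (t + 1) p =
      queue t p + inject t p - (if p = token t ∧ 1 ≤ queue t p then 1 else 0))
    (hbig : ∀ t, n ≤ queue t (token t) →
      order (t + 1) = moveToFront (token t) (order t) ∧ token (t + 1) = token t)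
    (hsmall : ∀ t, queue t (token t) < n →
      order (t + 1) = order t ∧ token (t + 1) = nextAfter (token t) (order t)) :
    (∀ a len : ℕ,
      (∀ t ∈ Finset.Ico a (a + len), n ^ 2 ≤ ∑ p, queue t p) →
      ((Finset.Ico a (a + len)).filter (fun t => queue t (token t) = 0)).card < n ^ 2) ∧
    ∀ t, (∑ p, queue t p) ≤ 2 * (n ^ 2 + b) :=
  stmt5_general n b inject hlb queue order token horder0 hq0 hqueue hbig hsmall
end

section
/- Consider the reservation mechanism in which at each round at most one station can reserve the second currently-available (unreserved) future round, or cancel its existing reservation, and each station holds at most one reservation at a time. Then in any infinite execution there are infinitely many regular (unreserved) rounds. -/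
/-!
Let `f t` be the earliest round after `t` that is unreserved at round `t`. A new reservation
always skips the earliest unreserved round and a cancellation only frees rounds, so `f t`
is still unreserved at round `t + 1`. If round `t + 1` is not regular, then `f t ≠ t + 1`,
hence `f (t + 1) ≤ f t`. Were there only finitely many regular rounds, `f` would be
eventually nonincreasing, which is impossible since `t < f t` for all `t`.
-/

section Reservation

variable {ι : Type*}

def Unreserved (σ : ι → Option ℕ) (r : ℕ) : Prop := ∀ q, σ q ≠ some r

def IsReservationStep (t : ℕ) (σ σ' : ι → Option ℕ) : Prop :=
  ∃ p : ι,
    (∀ q, q ≠ p → σ' q = σ q ∨ (σ q = some t ∧ σ' q = none)) ∧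
    (σ' p = σ p ∨ σ' p = none ∨
      ∃ r₂, σ' p = some r₂ ∧ t < r₂ ∧ Unreserved σ r₂ ∧
        ∃! r₁, t < r₁ ∧ r₁ < r₂ ∧ Unreserved σ r₁)

theorem exists_unreserved_gt [Finite ι] (σ : ι → Option ℕ) (t : ℕ) :
    ∃ r, t < r ∧ Unreserved σ r := by
  have hfin : (Option.some ⁻¹' Set.range σ).Finite :=
    (Set.finite_range σ).preimage (Option.some_injective _).injOn
  obtain ⟨r, hr, htr⟩ := hfin.infinite_compl.exists_gt t
  exact ⟨r, htr, fun q hq => hr ⟨q, hq⟩⟩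

open Classical in
noncomputable def firstUnreserved [Finite ι] (σ : ι → Option ℕ) (t : ℕ) : ℕ :=
  Nat.find (exists_unreserved_gt σ t)

theorem lt_firstUnreserved [Finite ι] (σ : ι → Option ℕ) (t : ℕ) :
    t < firstUnreserved σ t := by
  classical
  exact (Nat.find_spec (exists_unreserved_gt σ t)).1

theorem unreserved_firstUnreserved [Finite ι] (σ : ι → Option ℕ) (t : ℕ) :
    Unreserved σ (firstUnreserved σ t) := by
  classical
  exact (Nat.find_spec (exists_unreserved_gt σ t)).2

theorem firstUnreserved_le [Finite ι] {σ : ι → Option ℕ} {t r : ℕ} (htr : t < r)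
    (hr : Unreserved σ r) : firstUnreserved σ t ≤ r := by
  classical
  exact Nat.find_le ⟨htr, hr⟩

theorem not_unreserved_of_lt_firstUnreserved [Finite ι] {σ : ι → Option ℕ} {t r : ℕ}
    (htr : t < r) (hr : r < firstUnreserved σ t) : ¬Unreserved σ r := by
  classical
  exact fun hfree => Nat.find_min (exists_unreserved_gt σ t) hr ⟨htr, hfree⟩

namespace IsReservationStep

variable {t : ℕ} {σ σ' : ι → Option ℕ}

theorem unreserved_of_forall_lt (h : IsReservationStep t σ σ') {r : ℕ} (hfree : Unreserved σ r)
    (hmin : ∀ r', t < r' → r' < r → ¬Unreserved σ r') : Unreserved σ' r := by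
  obtain ⟨p, hother, hp⟩ := h
  intro q hq
  by_cases hqp : q = p
  · subst hqp
    rcases hp with hkeep | hcancel | ⟨r₂, hnew, -, -, r₁, ⟨htr₁, hr₁₂, hfree₁⟩, -⟩
    · exact hfree q (hkeep ▸ hq)
    · exact Option.some_ne_none _ (hcancel ▸ hq).symm
    · -- the new reservation skips the unreserved round `r₁`, which would lie before `r`
      obtain rfl : r₂ = r := Option.some_injective _ (hnew.symm.trans hq)
      exact hmin r₁ htr₁ hr₁₂ hfree₁
  · rcases hother q hqp with hkeep | ⟨-, hlapse⟩
    · exact hfree q (hkeep ▸ hq)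
    · exact Option.some_ne_none _ (hlapse ▸ hq).symm

theorem unreserved_firstUnreserved [Finite ι] (h : IsReservationStep t σ σ') :
    Unreserved σ' (firstUnreserved σ t) :=
  h.unreserved_of_forall_lt (_root_.unreserved_firstUnreserved σ t)
    fun _ => not_unreserved_of_lt_firstUnreserved

theorem firstUnreserved_succ_le [Finite ι] (h : IsReservationStep t σ σ')
    (hreg : ¬Unreserved σ' (t + 1)) : firstUnreserved σ' (t + 1) ≤ firstUnreserved σ t := by
  have hfree := h.unreserved_firstUnreserved
  have hne : firstUnreserved σ t ≠ t + 1 := fun heq => hreg (heq ▸ hfree)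
  exact firstUnreserved_le (by have := lt_firstUnreserved σ t; omega) hfree

end IsReservationStep

end Reservation

theorem not_eventually_succ_le_of_lt_self {f : ℕ → ℕ} (hf : ∀ t, t < f t) (N : ℕ) :
    ¬∀ t ≥ N, f (t + 1) ≤ f t := fun hanti =>
  have hle : f (N + f N) ≤ f N :=
    antitoneOn_nat_Ici_of_succ_le hanti (by simp) (by simp) (by omega)
  absurd (hf (N + f N)) (by omega)

theorem stmt11_general (n : ℕ) (res : ℕ → Fin n → Option ℕ)
    (hstep : ∀ t, ∃ p : Fin n,
      (∀ q, q ≠ p → res (t + 1) q = res t q ∨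
        (res t q = some t ∧ res (t + 1) q = none)) ∧
      (res (t + 1) p = res t p ∨ res (t + 1) p = none ∨
        ∃ r2, res (t + 1) p = some r2 ∧ t < r2 ∧ (∀ q, res t q ≠ some r2) ∧
          ∃! r1, t < r1 ∧ r1 < r2 ∧ ∀ q, res t q ≠ some r1)) :
    {t : ℕ | ∀ p, res t p ≠ some t}.Infinite := by
  intro hfin
  obtain ⟨N, hN⟩ := hfin.bddAbove
  have hstep' : ∀ t, IsReservationStep t (res t) (res (t + 1)) := hstep
  refine not_eventually_succ_le_of_lt_self (f := fun t => firstUnreserved (res t) t)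
    (fun t => lt_firstUnreserved _ t) N fun t ht => (hstep' t).firstUnreserved_succ_le ?_
  intro hreg
  have : t + 1 ≤ N := hN hreg
  omega

/-- Reservation mechanism: `res t p` is the round currently reserved by station `p` at
the start of round `t` (reservations are for present-or-future rounds); at each round at
most one station acts, either keeping its reservation, cancelling it, or reserving the
second currently-available (unreserved) future round, i.e. an unreserved round `r2 > t`
such that there is exactly one unreserved round strictly between `t` and `r2`;
reservations of the current round lapse.  Then there are infinitely many regular
rounds, i.e. rounds reserved by no station when they arrive. -/
theorem stmt11 (n : ℕ) (res : ℕ → Fin n → Option ℕ)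
    (hfuture : ∀ t p r, res t p = some r → t ≤ r)
    (hstep : ∀ t, ∃ p : Fin n,
      (∀ q, q ≠ p → res (t + 1) q = res t q ∨
        (res t q = some t ∧ res (t + 1) q = none)) ∧
      (res (t + 1) p = res t p ∨ res (t + 1) p = none ∨
        ∃ r2, res (t + 1) p = some r2 ∧ t < r2 ∧ (∀ q, res t q ≠ some r2) ∧
          ∃! r1, t < r1 ∧ r1 < r2 ∧ ∀ q, res t q ≠ some r1)) :
    {t : ℕ | ∀ p, res t p ≠ some t}.Infinite :=
  stmt11_general n res hstep
end
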